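/- arXiv:2206.10719 — 2 statements merged into one kernel-verified Lean document; each statement's English description precedes it below -/
import Mathlib

section
/- Let V be a complex vector space and let p, p̄, q, q̄, N, Λ be linear endomorphisms of V. Assume the anticommutation relations p∘q̄ + q̄∘p = 0 and q∘p̄ + p̄∘q = 0, and assume the Akizuki–Nakano identity Δ_p̄ = Δ_p + (N∘Λ − Λ∘N), where Δ_p = p∘q + q∘p and Δ_p̄ = p̄∘q̄ + q̄∘p̄. Then, with ∇ = p + p̄, ∇' = q + q̄ and Δ_∇ = ∇∘∇' + ∇'∘∇, one has Δ_∇ = 2Δ_p + (N∘Λ − Λ∘N) and Δ_∇ = 2Δ_p̄ − (N∘Λ − Λ∘N). -/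
/-- With `p, pbar, q, qbar, N, Lam` endomorphisms of a complex vector
space `V`, the anticommutation relations `p∘qbar + qbar∘p = 0` and `q∘pbar + pbar∘q = 0`,
and the Akizuki–Nakano identity `Δ_pbar = Δ_p + (N∘Lam − Lam∘N)`, the Chern Laplacian
`Δ_∇ = ∇∘∇' + ∇'∘∇` (where `∇ = p + pbar`, `∇' = q + qbar`) satisfies
`Δ_∇ = 2Δ_p + (N∘Lam − Lam∘N)` and `Δ_∇ = 2Δ_pbar − (N∘Lam − Lam∘N)`. -/
theorem chern_laplacian_akizuki_nakano
    (V : Type*) [AddCommGroup V] [Module ℂ V]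
    (p pbar q qbar N Lam : Module.End ℂ V)
    (h1 : p * qbar + qbar * p = 0)
    (h2 : q * pbar + pbar * q = 0)
    (hAN : pbar * qbar + qbar * pbar = (p * q + q * p) + (N * Lam - Lam * N)) :
    (p + pbar) * (q + qbar) + (q + qbar) * (p + pbar) =
        2 • (p * q + q * p) + (N * Lam - Lam * N) ∧
    (p + pbar) * (q + qbar) + (q + qbar) * (p + pbar) =
        2 • (pbar * qbar + qbar * pbar) - (N * Lam - Lam * N) := by
  simp only [two_smul]
  constructor
  · linear_combination (norm := noncomm_ring) h1 + h2 + hAN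
  · linear_combination (norm := noncomm_ring) h1 + h2 - hAN
end

section
/- Let n be a positive integer and let V be a complex inner product space with an orthogonal direct-sum decomposition V = V₀ ⊕ V₁ ⊕ ⋯ ⊕ Vₙ. Let d : V → V be a linear map with d(V_k) ⊆ V_{k+1} for k < n, d(Vₙ) = 0, and d∘d = 0, and let d* : V → V be a linear map satisfying ⟨d v, w⟩ = ⟨v, d* w⟩ for all v, w ∈ V, with d*(V_k) ⊆ V_{k−1} for k ≥ 1 and d*(V₀) = 0. Set D = d + d* and Δ = D∘D. Let θ > 0 and suppose that every eigenvalue of Δ that admits an eigenvector lying in a single summand V_k with k ≤ n − 1 is ≥ θ. Then: (i) every nonzero eigenvalue of Δ is a real number ≥ θ; and (ii) every eigenvalue μ of D is real and satisfies μ = 0 or μ² ≥ θ (so |μ| ≥ √θ whenever μ ≠ 0). -/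
/-!
Since `d² = 0` and `d*` is adjoint to `d`, also `d*² = 0`, so `Δ = d d* + d* d` preserves every
summand `V_k`, and every eigenvector of `Δ` has a component in some `V_k` that is an eigenvector
for the same eigenvalue. Only `k = n` escapes the hypothesis; there `d x = 0`, and `d*`, which
commutes with `Δ`, carries `x` to an eigenvector in `V_{n-1}`, nonzero because `λ x = d d* x`.
Finally `D` is symmetric, so its eigenvalues `μ` are real, and `μ²` is an eigenvalue of `Δ`.
-/

open DirectSum Set

theorem DirectSum.IsInternal.exists_mem_eigenvector {ι R M : Type*} [DecidableEq ι] [Ring R]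
    [AddCommGroup M] [Module R M] {A : ι → Submodule R M} (hA : IsInternal A)
    {T : Module.End R M} (hT : ∀ i, MapsTo T (A i) (A i)) {c : R} {v : M} (hv : v ≠ 0)
    (hTv : T v = c • v) : ∃ i, ∃ x ∈ A i, x ≠ 0 ∧ T x = c • x := by
  have hbij : Function.Bijective (coeLinearMap A) := hA
  have hcomm : coeLinearMap A ∘ₗ lmap (fun i ↦ T.restrict (hT i)) = T ∘ₗ coeLinearMap A :=
    linearMap_ext _ fun i ↦ LinearMap.ext fun x ↦ by
      simp only [LinearMap.comp_apply, lmap_lof, coeLinearMap_lof]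
      rfl
  obtain ⟨f, rfl⟩ := hbij.2 v
  have hf : lmap (fun i ↦ T.restrict (hT i)) f = c • f :=
    hbij.1 (by rw [← LinearMap.comp_apply, hcomm, LinearMap.comp_apply, hTv, map_smul])
  obtain ⟨i, hi⟩ : ∃ i, f i ≠ 0 := by
    by_contra! h
    exact hv (by rw [DFunLike.ext f 0 h, map_zero])
  exact ⟨i, f i, (f i).2, by simpa using hi, congrArg (fun g : ⨁ i, A i ↦ (g i : M)) hf⟩

section SquareZero

variable {R : Type*} [NonUnitalRing R] {a b : R}

theorem add_mul_self_eq_of_mul_self_eq_zero (ha : a * a = 0) (hb : b * b = 0) :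
    (a + b) * (a + b) = a * b + b * a := by
  simp only [add_mul, mul_add, ha, hb]
  abel

theorem commute_add_mul_self_right_of_mul_self_eq_zero (ha : a * a = 0) (hb : b * b = 0) :
    Commute ((a + b) * (a + b)) b := by
  rw [add_mul_self_eq_of_mul_self_eq_zero ha hb, Commute, SemiconjBy]
  simp only [add_mul, mul_add, mul_assoc, hb, ← mul_assoc b b, mul_zero, zero_mul]
  abel

end SquareZero

section Adjoint

variable {𝕜 E : Type*} [RCLike 𝕜] [NormedAddCommGroup E] [InnerProductSpace 𝕜 E]
  {d dstar : Module.End 𝕜 E}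

theorem mul_self_eq_zero_of_inner_map_eq (hadj : ∀ v w, inner 𝕜 (d v) w = inner 𝕜 v (dstar w))
    (hd2 : d * d = 0) : dstar * dstar = 0 := by
  ext u
  refine ext_inner_left 𝕜 fun x ↦ ?_
  rw [Module.End.mul_apply, ← hadj, ← hadj, ← Module.End.mul_apply, hd2]
  simp

theorem isSymmetric_add_of_inner_map_eq (hadj : ∀ v w, inner 𝕜 (d v) w = inner 𝕜 v (dstar w)) :
    (d + dstar).IsSymmetric := by
  intro v w
  have hadj' : inner 𝕜 (dstar v) w = inner 𝕜 v (d w) := by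
    rw [← inner_conj_symm, ← hadj, inner_conj_symm]
  rw [LinearMap.add_apply, LinearMap.add_apply, inner_add_left, inner_add_right, hadj, hadj',
    add_comm]

end Adjoint

theorem eigenvalue_real_and_sq_ge_of_isSymmetric {E : Type*} [NormedAddCommGroup E]
    [InnerProductSpace ℂ E] {D : Module.End ℂ E} (hD : D.IsSymmetric) {θ : ℝ}
    (hgap : ∀ lam : ℂ, lam ≠ 0 → (∃ v : E, v ≠ 0 ∧ (D * D) v = lam • v) →
      ∃ r : ℝ, lam = (r : ℂ) ∧ θ ≤ r)
    {mu : ℂ} {v : E} (hv : v ≠ 0) (hDv : D v = mu • v) :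
    ∃ r : ℝ, mu = (r : ℂ) ∧ (r = 0 ∨ θ ≤ r ^ 2) := by
  have hmu : mu = (mu.re : ℂ) := by
    refine (Complex.conj_eq_iff_re.mp ?_).symm
    exact hD.conj_eigenvalue_eq_self
      (Module.End.hasEigenvalue_of_hasEigenvector ⟨Module.End.mem_eigenspace_iff.mpr hDv, hv⟩)
  refine ⟨mu.re, hmu, ?_⟩
  rcases eq_or_ne mu 0 with rfl | hmu0
  · simp
  have hsq : (D * D) v = (mu ^ 2) • v := by
    rw [Module.End.mul_apply, hDv, map_smul, hDv, smul_smul, sq]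
  obtain ⟨s, hs, hθs⟩ := hgap (mu ^ 2) (pow_ne_zero 2 hmu0) ⟨v, hv, hsq⟩
  have : s = mu.re ^ 2 := by
    rw [hmu] at hs
    exact_mod_cast hs.symm
  exact Or.inr (this ▸ hθs)

section Graded

variable {K V : Type*} [Field K] [AddCommGroup V] [Module K V]

theorem eigenvector_map_of_map_eq_zero {d dstar : Module.End K V} (hd2 : d * d = 0)
    (hds2 : dstar * dstar = 0) {lam : K} (hlam : lam ≠ 0) {x : V} (hx : x ≠ 0) (hdx : d x = 0)
    (hΔx : ((d + dstar) * (d + dstar)) x = lam • x) :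
    dstar x ≠ 0 ∧ ((d + dstar) * (d + dstar)) (dstar x) = lam • dstar x := by
  refine ⟨fun h ↦ smul_ne_zero hlam hx ?_, ?_⟩
  · rw [← hΔx, add_mul_self_eq_of_mul_self_eq_zero hd2 hds2]
    simp [h, hdx]
  · rw [← Module.End.mul_apply, (commute_add_mul_self_right_of_mul_self_eq_zero hd2 hds2).eq,
      Module.End.mul_apply, hΔx, map_smul]

variable {n : ℕ} {Vsub : ℕ → Submodule K V} {d dstar : Module.End K V}
  (hdeg : ∀ k : ℕ, k < n → ∀ v ∈ Vsub k, d v ∈ Vsub (k + 1))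
  (hdn : ∀ v ∈ Vsub n, d v = 0) (hd2 : d * d = 0) (hds2 : dstar * dstar = 0)
  (hstardeg : ∀ k : ℕ, 1 ≤ k → ∀ v ∈ Vsub k, dstar v ∈ Vsub (k - 1))
  (hstar0 : ∀ v ∈ Vsub 0, dstar v = 0)
include hdeg hdn hd2 hds2 hstardeg hstar0

theorem laplacian_mapsTo (k : Fin (n + 1)) :
    MapsTo ((d + dstar) * (d + dstar)) (Vsub k) (Vsub k) := by
  intro v hv
  rw [add_mul_self_eq_of_mul_self_eq_zero hd2 hds2]
  refine add_mem ?_ ?_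
  · rcases Nat.eq_zero_or_pos k with hk | hk
    · simp [hstar0 v (hk ▸ hv)]
    · have := hdeg (k - 1) (by omega) _ (hstardeg k hk v hv)
      rwa [Nat.sub_add_cancel hk] at this
  · rcases Nat.lt_or_ge k n with hk | hk
    · simpa using hstardeg (k + 1) (by omega) _ (hdeg k hk v hv)
    · have hkn : (k : ℕ) = n := by omega
      simp [hdn v (hkn ▸ hv)]

theorem exists_le_pred_eigenvector_mem (hdec : IsInternal fun k : Fin (n + 1) ↦ Vsub k)
    {lam : K} (hlam : lam ≠ 0) {v : V} (hv : v ≠ 0)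
    (hΔv : ((d + dstar) * (d + dstar)) v = lam • v) :
    ∃ k ≤ n - 1, ∃ x ∈ Vsub k, x ≠ 0 ∧ ((d + dstar) * (d + dstar)) x = lam • x := by
  obtain ⟨k, x, hx, hx0, hΔx⟩ := hdec.exists_mem_eigenvector
    (laplacian_mapsTo hdeg hdn hd2 hds2 hstardeg hstar0) hv hΔv
  by_cases hk : (k : ℕ) ≤ n - 1
  · exact ⟨k, hk, x, hx, hx0, hΔx⟩
  have hxn : x ∈ Vsub n := (show (k : ℕ) = n by omega) ▸ hx
  obtain ⟨hdx0, hΔdx⟩ := eigenvector_map_of_map_eq_zero hd2 hds2 hlam hx0 (hdn x hxn) hΔx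
  refine ⟨n - 1, le_rfl, dstar x, ?_, hdx0, hΔdx⟩
  rcases Nat.eq_zero_or_pos n with rfl | hn
  · exact absurd (hstar0 x hxn) hdx0
  · exact hstardeg n hn x hxn

end Graded

theorem spectral_gap_dolbeault_dirac_general
    (n : ℕ) (θ : ℝ)
    (V : Type*) [NormedAddCommGroup V] [InnerProductSpace ℂ V]
    (Vsub : ℕ → Submodule ℂ V)
    (hdec : DirectSum.IsInternal fun k : Fin (n + 1) => Vsub k)
    (d dstar : Module.End ℂ V)
    (hdeg : ∀ k : ℕ, k < n → ∀ v ∈ Vsub k, d v ∈ Vsub (k + 1))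
    (hdn : ∀ v ∈ Vsub n, d v = 0)
    (hd2 : d * d = 0)
    (hadj : ∀ v w : V, (inner ℂ (d v) w : ℂ) = (inner ℂ v (dstar w) : ℂ))
    (hstardeg : ∀ k : ℕ, 1 ≤ k → ∀ v ∈ Vsub k, dstar v ∈ Vsub (k - 1))
    (hstar0 : ∀ v ∈ Vsub 0, dstar v = 0)
    (hgap : ∀ (lam : ℂ) (k : ℕ), k ≤ n - 1 →
      (∃ v ∈ Vsub k, v ≠ 0 ∧ ((d + dstar) * (d + dstar)) v = lam • v) →
      ∃ r : ℝ, lam = (r : ℂ) ∧ θ ≤ r) :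
    (∀ lam : ℂ, lam ≠ 0 →
      (∃ v : V, v ≠ 0 ∧ ((d + dstar) * (d + dstar)) v = lam • v) →
      ∃ r : ℝ, lam = (r : ℂ) ∧ θ ≤ r) ∧
    (∀ mu : ℂ, (∃ v : V, v ≠ 0 ∧ (d + dstar) v = mu • v) →
      ∃ r : ℝ, mu = (r : ℂ) ∧ (r = 0 ∨ θ ≤ r ^ 2)) := by
  have hds2 := mul_self_eq_zero_of_inner_map_eq hadj hd2
  have hΔgap : ∀ lam : ℂ, lam ≠ 0 →
      (∃ v : V, v ≠ 0 ∧ ((d + dstar) * (d + dstar)) v = lam • v) →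
      ∃ r : ℝ, lam = (r : ℂ) ∧ θ ≤ r := by
    rintro lam hlam ⟨v, hv, hΔv⟩
    obtain ⟨k, hk, hx⟩ :=
      exists_le_pred_eigenvector_mem hdeg hdn hd2 hds2 hstardeg hstar0 hdec hlam hv hΔv
    exact hgap lam k hk hx
  exact ⟨hΔgap, fun mu ⟨v, hv, hDv⟩ ↦
    eigenvalue_real_and_sq_ge_of_isSymmetric (isSymmetric_add_of_inner_map_eq hadj) hΔgap hv hDv⟩

/-- Let `V = V₀ ⊕ ⋯ ⊕ Vₙ` be an orthogonal decomposition of a complex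
inner product space, `d` a degree `+1` map with `d∘d = 0` and `d(Vₙ) = 0`, and `d*` an
adjoint of `d` of degree `−1` with `d*(V₀) = 0`.  Set `D = d + d*` and `Δ = D∘D`.  If
`θ > 0` and every eigenvalue of `Δ` admitting an eigenvector lying in a single summand
`V_k` with `k ≤ n − 1` is `≥ θ`, then every nonzero eigenvalue of `Δ` is a real number
`≥ θ`, and every eigenvalue `μ` of `D` is real with `μ = 0` or `μ² ≥ θ`. -/
theorem spectral_gap_dolbeault_dirac
    (n : ℕ) (hn : 0 < n) (θ : ℝ) (hθ : 0 < θ)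
    (V : Type*) [NormedAddCommGroup V] [InnerProductSpace ℂ V]
    (Vsub : ℕ → Submodule ℂ V)
    (hdec : DirectSum.IsInternal fun k : Fin (n + 1) => Vsub k)
    (horth : ∀ k l : ℕ, k ≠ l → ∀ v ∈ Vsub k, ∀ w ∈ Vsub l, (inner ℂ v w : ℂ) = 0)
    (d dstar : Module.End ℂ V)
    (hdeg : ∀ k : ℕ, k < n → ∀ v ∈ Vsub k, d v ∈ Vsub (k + 1))
    (hdn : ∀ v ∈ Vsub n, d v = 0)
    (hd2 : d * d = 0)
    (hadj : ∀ v w : V, (inner ℂ (d v) w : ℂ) = (inner ℂ v (dstar w) : ℂ))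
    (hstardeg : ∀ k : ℕ, 1 ≤ k → ∀ v ∈ Vsub k, dstar v ∈ Vsub (k - 1))
    (hstar0 : ∀ v ∈ Vsub 0, dstar v = 0)
    (hgap : ∀ (lam : ℂ) (k : ℕ), k ≤ n - 1 →
      (∃ v ∈ Vsub k, v ≠ 0 ∧ ((d + dstar) * (d + dstar)) v = lam • v) →
      ∃ r : ℝ, lam = (r : ℂ) ∧ θ ≤ r) :
    (∀ lam : ℂ, lam ≠ 0 →
      (∃ v : V, v ≠ 0 ∧ ((d + dstar) * (d + dstar)) v = lam • v) →
      ∃ r : ℝ, lam = (r : ℂ) ∧ θ ≤ r) ∧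
    (∀ mu : ℂ, (∃ v : V, v ≠ 0 ∧ (d + dstar) v = mu • v) →
      ∃ r : ℝ, mu = (r : ℂ) ∧ (r = 0 ∨ θ ≤ r ^ 2)) :=
  spectral_gap_dolbeault_dirac_general n θ V Vsub hdec d dstar hdeg hdn hd2 hadj hstardeg hstar0
    hgap
end
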